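/- Let u be a regular linear functional on 𝒫 satisfying D_{q,ω}(φu) = ψu, with φ(x) = ax² + bx + c and ψ(x) = dx + e not both zero, and let (P_n)_{n≥0} be the monic OPS with respect to u (so d ≠ 0 and dq + a ≠ 0 by admissibility). Then the first recurrence coefficient γ₁ := ⟨u, P₁²⟩/⟨u, 1⟩ satisfies γ₁ = −(1/(dq + a))·φ(−e/d); equivalently, with u_n := ⟨u, x^n⟩, one has u₁ = −(e/d)·u₀ and u₂ = −(1/(dq+a))·(−(qe+b)(e/d) + c)·u₀. -/

import Mathlib

open Polynomial

noncomputable section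

namespace HahnOPSPaper

/-- The algebraic dual of the space of complex polynomials. -/
abbrev PDual : Type := Module.Dual ℂ (Polynomial ℂ)

/-- Left multiplication of a functional by a polynomial: `⟨φu, f⟩ = ⟨u, φf⟩`. -/
def pMul (φ : Polynomial ℂ) (u : PDual) : PDual := u ∘ₗ LinearMap.mulLeft ℂ φ

/-- Distributional derivative: `⟨Du, f⟩ = -⟨u, f'⟩`. -/
def dDeriv (u : PDual) : PDual :=
  -(u ∘ₗ (Polynomial.derivative : Polynomial ℂ →ₗ[ℂ] Polynomial ℂ))

/-- The q-bracket `[n]_q = 1 + q + ⋯ + q^(n-1)`. -/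
def qBracket (q : ℂ) (n : ℕ) : ℂ := ∑ i ∈ Finset.range n, q ^ i

/-- q-factorial `[n]_q!`. -/
def qFact (q : ℂ) (n : ℕ) : ℂ := ∏ i ∈ Finset.range n, qBracket q (i + 1)

/-- `D` is Hahn's operator `D_{q,ω}`, i.e. the (unique, for `(q,ω) ≠ (1,0)`) linear operator
with `((q-1)x + ω)·(Df)(x) = f(qx+ω) - f(x)`. -/
def IsHahn (q ω : ℂ) (D : Polynomial ℂ →ₗ[ℂ] Polynomial ℂ) : Prop :=
  ∀ f : Polynomial ℂ, (C (q - 1) * X + C ω) * D f = f.comp (C q * X + C ω) - f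

/-- The operator `(L_{q,ω} f)(x) = f(qx + ω)`. -/
def Lop (q ω : ℂ) : Polynomial ℂ →ₗ[ℂ] Polynomial ℂ :=
  (aeval (C q * X + C ω)).toLinearMap

/-- The distributional Hahn operator `D_{q,ω}` on the dual, built from the ordinary operator
`D*_{q,ω} = D_{1/q,-ω/q}`: `⟨D_{q,ω}u, f⟩ = -q⁻¹·⟨u, D*_{q,ω}f⟩`. -/
def hahnDual (q : ℂ) (Dstar : Polynomial ℂ →ₗ[ℂ] Polynomial ℂ) (u : PDual) : PDual :=
  (-q⁻¹) • (u ∘ₗ Dstar)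

/-- The distributional operator `L_{q,ω}`: `⟨L_{q,ω}u, f⟩ = q⁻¹·⟨u, L_{1/q,-ω/q}f⟩`. -/
def LDual (q ω : ℂ) (u : PDual) : PDual := q⁻¹ • (u ∘ₗ Lop q⁻¹ (-ω / q))

/-- A functional is regular if it admits a monic orthogonal polynomial sequence. -/
def IsRegularFunc (u : PDual) : Prop :=
  ∃ P : ℕ → Polynomial ℂ, (∀ n, (P n).Monic ∧ (P n).natDegree = n) ∧
    (∀ m n, m ≠ n → u (P m * P n) = 0) ∧ (∀ n, u (P n ^ 2) ≠ 0)

/-- `P` is the monic OPS with respect to `u`. -/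
def IsMonicOPS (u : PDual) (P : ℕ → Polynomial ℂ) : Prop :=
  (∀ n, (P n).Monic ∧ (P n).natDegree = n) ∧
    (∀ m n, m ≠ n → u (P m * P n) = 0) ∧ (∀ n, u (P n ^ 2) ≠ 0)

/-- Continuous case: `d_n = d + a·n`. -/
def ddC (a d : ℂ) (n : ℕ) : ℂ := d + a * n

/-- Continuous case: `e_n = e + b·n`. -/
def eeC (b e : ℂ) (n : ℕ) : ℂ := e + b * n

/-- Continuous case: `β_n = n·e_{n-1}/d_{2n-2} - (n+1)·e_n/d_{2n}`. -/
def betaC (a b d e : ℂ) (n : ℕ) : ℂ :=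
  n * eeC b e (n - 1) / ddC a d (2 * n - 2) - (n + 1) * eeC b e n / ddC a d (2 * n)

/-- Continuous case: `γ_{n+1} = -((n+1)·d_{n-1}/(d_{2n-1}·d_{2n+1}))·φ(-e_n/d_{2n})`. -/
def gammaC (a b d e : ℂ) (φ : Polynomial ℂ) (n : ℕ) : ℂ :=
  -((n + 1) * ddC a d (n - 1) / (ddC a d (2 * n - 1) * ddC a d (2 * n + 1))) *
    φ.eval (-(eeC b e n) / ddC a d (2 * n))

/-- `d_n = d·q^n + a·[n]_q`. -/
def ddQ (q a d : ℂ) (n : ℕ) : ℂ := d * q ^ n + a * qBracket q n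

/-- `e_n = e·q^n + (ω·d_n + b)·[n]_q`. -/
def eeQ (q ω a b d e : ℂ) (n : ℕ) : ℂ :=
  e * q ^ n + (ω * ddQ q a d n + b) * qBracket q n

/-- `β_n = ω[n]_q + [n]_q·e_{n-1}/d_{2n-2} - [n+1]_q·e_n/d_{2n}`. -/
def betaQ (q ω a b d e : ℂ) (n : ℕ) : ℂ :=
  ω * qBracket q n + qBracket q n * eeQ q ω a b d e (n - 1) / ddQ q a d (2 * n - 2)
    - qBracket q (n + 1) * eeQ q ω a b d e n / ddQ q a d (2 * n)

/-- `γ_{n+1} = -(q^n·[n+1]_q·d_{n-1}/(d_{2n-1}·d_{2n+1}))·φ(-e_n/d_{2n})`. -/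
def gammaQ (q ω a b d e : ℂ) (φ : Polynomial ℂ) (n : ℕ) : ℂ :=
  -(q ^ n * qBracket q (n + 1) * ddQ q a d (n - 1) /
      (ddQ q a d (2 * n - 1) * ddQ q a d (2 * n + 1))) *
    φ.eval (-(eeQ q ω a b d e n) / ddQ q a d (2 * n))

/-- `Φ(x;n) = ∏_{j=1}^n φ(q^j x + ω[j]_q)`. -/
def PhiQ (q ω : ℂ) (φ : Polynomial ℂ) (n : ℕ) : Polynomial ℂ :=
  ∏ j ∈ Finset.range n, φ.comp (C (q ^ (j + 1)) * X + C (ω * qBracket q (j + 1)))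

/-- `k_n = q^{n(n-3)/2}·∏_{j=0}^{n-1} d_{n+j-1}⁻¹`. -/
def kQ (q a d : ℂ) (n : ℕ) : ℂ :=
  q ^ (((n : ℤ) * ((n : ℤ) - 3)) / 2) * ∏ j ∈ Finset.range n, (ddQ q a d (n + j - 1))⁻¹

/-! The Pearson equation `D(φu) = ψu` reads `⟨u, ψf⟩ = -q⁻¹⟨u, φ·D*f⟩`; taking `f = 1` and `f = X`
gives `u₁` and `u₂`, hence `γ₁ = (u₀u₂ - u₁²)/u₀²`, once `d ≠ 0` and `dq + a ≠ 0` are known.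
Both come from regularity: no nonzero polynomial `π` has `πu = 0`, and `D*` maps onto `𝒫`, since by
the product rule `D*(x^{n+1})` has degree `n` and leading coefficient `[n+1]_{1/q} ≠ 0`.
If `d = 0`, then `e = 0` and `φu` vanishes on the range of `D*`, so `φ = 0 = ψ`.
If `dq + a = 0`, the two moment equations force `φ = -qψ(x - μ)`, and the product rule
`D*((x - μ)g) = σ(x - μ)·D*g + g`, with `σ(x) = x/q - ω/q`, turns the Pearson equation into
`ψ(x - μ)σ(x - μ)u = 0`. -/

lemma qBracket_succ (q : ℂ) (n : ℕ) : qBracket q (n + 1) = q * qBracket q n + 1 := by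
  simp only [qBracket, Finset.sum_range_succ', pow_succ', Finset.mul_sum, pow_zero]

lemma qBracket_ne_zero {q : ℂ} (hq : ∀ n : ℕ, 0 < n → q ^ n = 1 → q = 1) {n : ℕ}
    (hn : 0 < n) : qBracket q n ≠ 0 := by
  intro h
  by_cases hq1 : q = 1
  · simp [qBracket, hq1] at h
    omega
  · have hpow : q ^ n - 1 = 0 := by rw [← geom_sum_mul, ← qBracket, h, zero_mul]
    exact hq1 (hq n hn (sub_eq_zero.mp hpow))

lemma apply_C_mul (u : PDual) (a : ℂ) (f : ℂ[X]) : u (C a * f) = a * u f := by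
  rw [← smul_eq_C_mul, map_smul, smul_eq_mul]

lemma apply_C (u : PDual) (a : ℂ) : u (C a) = a * u 1 := by
  rw [← mul_one (C a), apply_C_mul]

section Hahn

variable {p w : ℂ} {D : ℂ[X] →ₗ[ℂ] ℂ[X]}

lemma hahnMultiplier_ne_zero (hpw : p ≠ 1 ∨ w ≠ 0) : C (p - 1) * X + C w ≠ 0 := by
  intro h
  have h1 : p - 1 = 0 := by simpa using congrArg (coeff · 1) h
  have h0 : w = 0 := by simpa using congrArg (coeff · 0) h
  exact hpw.elim (· (sub_eq_zero.mp h1)) (· h0)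

namespace IsHahn

variable (hD : IsHahn p w D) (hpw : p ≠ 1 ∨ w ≠ 0)
include hD hpw

lemma map_one : D 1 = 0 :=
  mul_left_cancel₀ (hahnMultiplier_ne_zero hpw) (by rw [hD]; simp)

lemma map_X : D X = 1 :=
  mul_left_cancel₀ (hahnMultiplier_ne_zero hpw) (by rw [hD]; simp only [X_comp, C_sub, C_1]; ring)

lemma map_X_sub_C (μ : ℂ) : D (X - C μ) = 1 := by
  rw [map_sub, hD.map_X hpw, ← mul_one (C μ), ← smul_eq_C_mul, map_smul, hD.map_one hpw,
    smul_zero, sub_zero]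

lemma map_mul (f g : ℂ[X]) : D (f * g) = f.comp (C p * X + C w) * D g + g * D f := by
  apply mul_left_cancel₀ (hahnMultiplier_ne_zero hpw)
  linear_combination hD (f * g) - f.comp (C p * X + C w) * hD g - g * hD f
    + mul_comp f g (C p * X + C w)

lemma natDegree_le_and_coeff_map_X_pow_succ (n : ℕ) :
    (D (X ^ (n + 1))).natDegree ≤ n ∧ (D (X ^ (n + 1))).coeff n = qBracket p (n + 1) := by
  induction n with
  | zero => simp [hD.map_X hpw, qBracket]
  | succ n ih =>
    obtain ⟨hdeg, hcoeff⟩ := ih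
    have hrec : D (X ^ (n + 2)) = (C p * X + C w) * D (X ^ (n + 1)) + X ^ (n + 1) := by
      rw [pow_succ' X (n + 1), hD.map_mul hpw, hD.map_X hpw, X_comp, mul_one]
    rw [hrec]
    constructor
    · refine natDegree_add_le_of_degree_le ?_ (by simp)
      refine (natDegree_mul_le).trans ?_
      have := natDegree_linear_le (a := p) (b := w)
      omega
    · rw [coeff_add, add_mul, coeff_add, mul_assoc, coeff_C_mul, coeff_X_mul, coeff_C_mul,
        coeff_eq_zero_of_natDegree_lt (by omega : (D (X ^ (n + 1))).natDegree < n + 1), hcoeff,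
        coeff_X_pow_self, qBracket_succ p (n + 1)]
      ring

lemma surjective (hp : ∀ n : ℕ, 0 < n → p ^ n = 1 → p = 1) : Function.Surjective D := by
  suffices h : ∀ n : ℕ, ∀ g : ℂ[X], g.degree < n → ∃ f, D f = g from
    fun g => h _ g <|
      degree_le_natDegree.trans_lt (WithBot.coe_lt_coe.mpr g.natDegree.lt_succ_self)
  intro n
  induction n with
  | zero => exact fun g hg => ⟨0, by simp_all⟩
  | succ n ih =>
    intro g hg
    obtain ⟨hdeg, hcoeff⟩ := hD.natDegree_le_and_coeff_map_X_pow_succ hpw n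
    set t := C (g.coeff n / qBracket p (n + 1)) * X ^ (n + 1)
    have hDt : D t = C (g.coeff n / qBracket p (n + 1)) * D (X ^ (n + 1)) := by
      simp only [t, ← smul_eq_C_mul, map_smul]
    obtain ⟨f, hf⟩ : ∃ f, D f = g - D t := by
      refine ih _ ((degree_lt_iff_coeff_zero _ _).mpr fun m hm => ?_)
      rw [degree_lt_iff_coeff_zero] at hg
      rcases hm.eq_or_lt with rfl | hm
      · rw [coeff_sub, hDt, coeff_C_mul, hcoeff,
          div_mul_cancel₀ _ (qBracket_ne_zero hp n.succ_pos), sub_self]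
      · rw [coeff_sub, hDt, coeff_C_mul, hg m hm,
          coeff_eq_zero_of_natDegree_lt (hdeg.trans_lt hm), mul_zero, sub_zero]
    exact ⟨f + t, by rw [map_add, hf, sub_add_cancel]⟩

end IsHahn

end Hahn

namespace IsMonicOPS

variable {u : PDual} {P : ℕ → ℂ[X]} (hP : IsMonicOPS u P)
include hP

lemma degree_sub_leadingCoeff_mul_lt {g : ℂ[X]} (hg : g ≠ 0) :
    (g - C g.leadingCoeff * P g.natDegree).degree < g.degree := by
  obtain ⟨hmon, hdeg⟩ := hP.1 g.natDegree
  have hlc : (C g.leadingCoeff * P g.natDegree).leadingCoeff = g.leadingCoeff := by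
    rw [leadingCoeff_C_mul_of_isUnit (leadingCoeff_ne_zero.mpr hg).isUnit, hmon.leadingCoeff,
      mul_one]
  refine degree_sub_lt_left ?_ hg hlc.symm
  rw [degree_C_mul (leadingCoeff_ne_zero.mpr hg), degree_eq_natDegree hmon.ne_zero, hdeg,
    degree_eq_natDegree hg]

lemma apply_mul_eq_zero_of_degree_lt {n : ℕ} {g : ℂ[X]} (hg : g.degree < n) :
    u (g * P n) = 0 := by
  induction h : g.natDegree using Nat.strong_induction_on generalizing g with
  | _ _ ih =>
    subst h
    by_cases hg0 : g = 0
    · simp [hg0]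
    have hk : g.natDegree < n := by exact_mod_cast (degree_eq_natDegree hg0).symm.trans_lt hg
    have hrest : u ((g - C g.leadingCoeff * P g.natDegree) * P n) = 0 := by
      by_cases hr0 : g - C g.leadingCoeff * P g.natDegree = 0
      · simp [hr0]
      have hlt := hP.degree_sub_leadingCoeff_mul_lt hg0
      exact ih _ (natDegree_lt_natDegree hr0 hlt) (hlt.trans hg) rfl
    calc u (g * P n)
        = g.leadingCoeff * u (P g.natDegree * P n)
            + u ((g - C g.leadingCoeff * P g.natDegree) * P n) := by
          rw [← apply_C_mul, ← map_add]; congr 1; ring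
      _ = 0 := by rw [hP.2.1 _ n hk.ne, hrest]; ring

lemma eq_zero_of_forall_apply_mul_eq_zero {π : ℂ[X]} (h : ∀ g, u (π * g) = 0) : π = 0 := by
  by_contra hπ
  have hrest : u ((π - C π.leadingCoeff * P π.natDegree) * P π.natDegree) = 0 :=
    hP.apply_mul_eq_zero_of_degree_lt
      ((hP.degree_sub_leadingCoeff_mul_lt hπ).trans_eq (degree_eq_natDegree hπ))
  have hsplit : π.leadingCoeff * u (P π.natDegree ^ 2)
      = u (π * P π.natDegree) - u ((π - C π.leadingCoeff * P π.natDegree) * P π.natDegree) := by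
    rw [← apply_C_mul, ← map_sub]; congr 1; ring
  rw [h, hrest, sub_zero] at hsplit
  exact mul_ne_zero (leadingCoeff_ne_zero.mpr hπ) (hP.2.2 _) hsplit

lemma P_zero_eq_one : P 0 = 1 := (hP.1 0).1.natDegree_eq_zero.mp (hP.1 0).2

lemma apply_one_ne_zero : u 1 ≠ 0 := by
  simpa [hP.P_zero_eq_one] using hP.2.2 0

lemma apply_one_mul_apply_P_one_sq : u 1 * u (P 1 ^ 2) = u 1 * u (X ^ 2) - u X ^ 2 := by
  have hP1 : P 1 = X + C ((P 1).coeff 0) := (hP.1 1).1.eq_X_add_C (hP.1 1).2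
  set s := (P 1).coeff 0
  have horth : u X + s * u 1 = 0 := by
    simpa [hP.P_zero_eq_one, hP1, apply_C] using hP.2.1 1 0 one_ne_zero
  have hsq : u (P 1 ^ 2) = u (X ^ 2) + 2 * s * u X + s ^ 2 * u 1 := by
    rw [hP1, show (X + C s) ^ 2 = X ^ 2 + C (2 * s) * X + C (s ^ 2) by
      simp only [map_mul, map_pow, map_ofNat]; ring]
    simp only [map_add, apply_C_mul, apply_C]
  rw [hsq]
  linear_combination (u X + s * u 1) * horth

end IsMonicOPS

section Pearson

variable {q : ℂ} {D : ℂ[X] →ₗ[ℂ] ℂ[X]} {u : PDual} {φ ψ : ℂ[X]} {a b c d e : ℂ}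

lemma apply_mul_eq_of_hahnDual_eq (heq : hahnDual q D (pMul φ u) = pMul ψ u) (f : ℂ[X]) :
    u (ψ * f) = -q⁻¹ * u (φ * D f) := by
  simpa [hahnDual, pMul] using (LinearMap.congr_fun heq f).symm

lemma apply_X_of_hahnDual_eq (hD1 : D 1 = 0) (heq : hahnDual q D (pMul φ u) = pMul ψ u)
    (hψ : ψ = C d * X + C e) : d * u X + e * u 1 = 0 := by
  simpa [hψ, hD1, apply_C_mul, apply_C] using apply_mul_eq_of_hahnDual_eq heq 1

lemma apply_X_sq_of_hahnDual_eq (hq0 : q ≠ 0) (hDX : D X = 1)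
    (heq : hahnDual q D (pMul φ u) = pMul ψ u)
    (hφ : φ = C a * X ^ 2 + C b * X + C c) (hψ : ψ = C d * X + C e) :
    (d * q + a) * u (X ^ 2) + (q * e + b) * u X + c * u 1 = 0 := by
  have h := apply_mul_eq_of_hahnDual_eq heq X
  rw [hDX, mul_one, hφ, hψ, add_mul, mul_assoc, ← pow_two] at h
  simp only [map_add, apply_C_mul, apply_C] at h
  field_simp at h
  linear_combination h

lemma linear_coeff_ne_zero_of_hahnDual_eq {P : ℕ → ℂ[X]} (hP : IsMonicOPS u P) (hq0 : q ≠ 0)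
    (hD1 : D 1 = 0) (hsurj : Function.Surjective D) (heq : hahnDual q D (pMul φ u) = pMul ψ u)
    (hψ : ψ = C d * X + C e) (hne : φ ≠ 0 ∨ ψ ≠ 0) : d ≠ 0 := by
  rintro rfl
  have he : e = 0 := by
    simpa [hP.apply_one_ne_zero] using apply_X_of_hahnDual_eq hD1 heq hψ
  have hψ0 : ψ = 0 := by simp [hψ, he]
  have hφ0 : φ = 0 := hP.eq_zero_of_forall_apply_mul_eq_zero fun g => by
    obtain ⟨f, rfl⟩ := hsurj g
    simpa [hψ0, hq0] using (apply_mul_eq_of_hahnDual_eq heq f).symm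
  exact hne.elim (· hφ0) (· hψ0)

lemma admissible_of_hahnDual_eq {p w : ℂ} (hD : IsHahn p w D) (hpw : p ≠ 1 ∨ w ≠ 0)
    (hp0 : p ≠ 0) (hsurj : Function.Surjective D) {P : ℕ → ℂ[X]} (hP : IsMonicOPS u P)
    (hq0 : q ≠ 0) (heq : hahnDual q D (pMul φ u) = pMul ψ u)
    (hφ : φ = C a * X ^ 2 + C b * X + C c) (hψ : ψ = C d * X + C e) (hd : d ≠ 0) :
    d * q + a ≠ 0 := by
  intro hda
  obtain ⟨μ, hμ⟩ : ∃ μ, q * d * μ = b + q * e := ⟨(b + q * e) / (q * d), by field_simp⟩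
  have hc : c = q * e * μ := by
    have h : (c * d - (q * e + b) * e) * u 1 = 0 := by
      linear_combination d * apply_X_sq_of_hahnDual_eq hq0 (hD.map_X hpw) heq hφ hψ
        - (q * e + b) * apply_X_of_hahnDual_eq (hD.map_one hpw) heq hψ - d * u (X ^ 2) * hda
    have h' : (c - q * e * μ) * d = 0 := by
      linear_combination (mul_eq_zero.mp h).resolve_right hP.apply_one_ne_zero - e * hμ
    exact sub_eq_zero.mp ((mul_eq_zero.mp h').resolve_right hd)
  have hφψ : φ = -(C q * ψ * (X - C μ)) := by
    rw [hφ, hψ, show b = q * d * μ - q * e by linear_combination -hμ, hc,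
      show a = -(d * q) by linear_combination hda]
    simp only [map_neg, map_mul, map_sub]
    ring
  have hσ : (X - C μ).comp (C p * X + C w) = C p * X + C (w - μ) := by
    simp only [sub_comp, X_comp, C_comp, map_sub]; ring
  have hann : ∀ g, u (ψ * (X - C μ) * (C p * X + C (w - μ)) * g) = 0 := by
    intro g
    obtain ⟨G, rfl⟩ := hsurj g
    have h := apply_mul_eq_of_hahnDual_eq heq ((X - C μ) * G)
    rw [hφψ, hD.map_mul hpw, hσ, hD.map_X_sub_C hpw, mul_one,
      show -(C q * ψ * (X - C μ)) * ((C p * X + C (w - μ)) * D G + G)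
        = C (-q) * (ψ * (X - C μ) * (C p * X + C (w - μ)) * D G + ψ * ((X - C μ) * G)) by
        simp only [map_neg]; ring,
      apply_C_mul, map_add] at h
    field_simp at h
    linear_combination -h
  have hπ := hP.eq_zero_of_forall_apply_mul_eq_zero hann
  have hψ0 : ψ ≠ 0 := fun h => hd (by simpa [hψ] using congrArg (coeff · 1) h)
  have hσ0 : C p * X + C (w - μ) ≠ 0 := fun h => hp0 (by simpa using congrArg (coeff · 1) h)
  exact mul_ne_zero (mul_ne_zero hψ0 (X_sub_C_ne_zero μ)) hσ0 hπ

end Pearson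

theorem stmt_19_general (q ω : ℂ) (hq0 : q ≠ 0) (hqω : q ≠ 1 ∨ ω ≠ 0)
    (hqr : ∀ n : ℕ, 0 < n → q ^ n = 1 → q = 1)
    (a b c d e : ℂ) (φ ψ : Polynomial ℂ)
    (hφ : φ = C a * X ^ 2 + C b * X + C c) (hψ : ψ = C d * X + C e)
    (hne : φ ≠ 0 ∨ ψ ≠ 0)
    (Dstar : Polynomial ℂ →ₗ[ℂ] Polynomial ℂ) (hDstar : IsHahn q⁻¹ (-ω / q) Dstar)
    (u : PDual)
    (heq : hahnDual q Dstar (pMul φ u) = pMul ψ u)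
    (P : ℕ → Polynomial ℂ) (hP : IsMonicOPS u P) :
    u (P 1 ^ 2) / u 1 = -(1 / (d * q + a)) * φ.eval (-e / d) ∧
    u X = -(e / d) * u 1 ∧
    u (X ^ 2) = -(1 / (d * q + a)) * (-((q * e + b) * (e / d)) + c) * u 1 := by
  have hpw : q⁻¹ ≠ 1 ∨ -ω / q ≠ 0 :=
    hqω.imp (fun h h' => h (inv_eq_one.mp h')) (fun h h' => h (by simpa [hq0] using h'))
  have hsurj : Function.Surjective Dstar :=
    hDstar.surjective hpw fun n hn h => inv_eq_one.mpr (hqr n hn (by simpa using h))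
  have hd := linear_coeff_ne_zero_of_hahnDual_eq hP hq0 (hDstar.map_one hpw) hsurj heq hψ hne
  have hda := admissible_of_hahnDual_eq hDstar hpw (inv_ne_zero hq0) hsurj hP hq0 heq hφ hψ hd
  have h0 := apply_X_of_hahnDual_eq (hDstar.map_one hpw) heq hψ
  have h1 := apply_X_sq_of_hahnDual_eq hq0 (hDstar.map_X hpw) heq hφ hψ
  have hγ := hP.apply_one_mul_apply_P_one_sq
  have hu0 := hP.apply_one_ne_zero
  refine ⟨?_, ?_, ?_⟩
  · have key : u 1 * (d ^ 2 * (d * q + a) * u (P 1 ^ 2)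
        + (a * e ^ 2 - b * e * d + c * d ^ 2) * u 1) = 0 := by
      linear_combination d ^ 2 * (d * q + a) * hγ + d ^ 2 * u 1 * h1
        + (-d * (d * q + a) * u X + (a * e - b * d) * u 1) * h0
    rw [div_eq_iff hu0, hφ]
    simp only [eval_add, eval_mul, eval_pow, eval_C, eval_X]
    field_simp
    linear_combination (mul_eq_zero.mp key).resolve_left hu0
  · field_simp
    linear_combination h0
  · field_simp
    linear_combination d * h1 - (q * e + b) * h0

theorem stmt_19 (q ω : ℂ) (hq0 : q ≠ 0) (hqω : q ≠ 1 ∨ ω ≠ 0)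
    (hqr : ∀ n : ℕ, 0 < n → q ^ n = 1 → q = 1)
    (a b c d e : ℂ) (φ ψ : Polynomial ℂ)
    (hφ : φ = C a * X ^ 2 + C b * X + C c) (hψ : ψ = C d * X + C e)
    (hne : φ ≠ 0 ∨ ψ ≠ 0)
    (Dstar : Polynomial ℂ →ₗ[ℂ] Polynomial ℂ) (hDstar : IsHahn q⁻¹ (-ω / q) Dstar)
    (u : PDual) (hreg : IsRegularFunc u)
    (heq : hahnDual q Dstar (pMul φ u) = pMul ψ u)
    (P : ℕ → Polynomial ℂ) (hP : IsMonicOPS u P) :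
    u (P 1 ^ 2) / u 1 = -(1 / (d * q + a)) * φ.eval (-e / d) ∧
    u X = -(e / d) * u 1 ∧
    u (X ^ 2) = -(1 / (d * q + a)) * (-((q * e + b) * (e / d)) + c) * u 1 :=
  stmt_19_general q ω hq0 hqω hqr a b c d e φ ψ hφ hψ hne Dstar hDstar u heq P hP

end HahnOPSPaper
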